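/- arXiv:2205.08673 — 3 statements merged into one kernel-verified Lean document; each statement's English description precedes it below -/
import Mathlib

section
/- If the entries of an incomplete pairwise comparison matrix are specified exactly on the edges of a tree on the n vertices (together with reciprocals), then there is a completion to a consistent PCM, and this completion is unique. -/
/-!
Taking logarithms turns the reciprocal data into an antisymmetric edge function, which on a tree
has a potential `φ`: sum it along the unique path from a fixed root. Then `exp (φ j - φ i)` is a
consistent completion. Conversely, a consistent matrix is the product of its entries along any
walk, so it is determined by its values on the edges of a connected graph.
-/

namespace SimpleGraph

variable {V α : Type*} {G : SimpleGraph V}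

def Walk.sumAlong [AddCommMonoid α] (f : V → V → α) {u v : V} (p : G.Walk u v) : α :=
  (p.darts.map fun d => f d.fst d.snd).sum

theorem Walk.sumAlong_concat [AddCommMonoid α] (f : V → V → α) {u v w : V} (p : G.Walk u v)
    (h : G.Adj v w) : (p.concat h).sumAlong f = p.sumAlong f + f v w := by
  simp [Walk.sumAlong, List.concat_eq_append]

theorem IsAcyclic.concat_or_concat_of_adj (hG : G.IsAcyclic) {r i j : V} {p : G.Walk r i}
    {q : G.Walk r j} (hp : p.IsPath) (hq : q.IsPath) (h : G.Adj i j) :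
    q = p.concat h ∨ p = q.concat h.symm := by
  by_cases hi : i ∈ q.support
  · exact .inl (hG.path_concat hp hq h hi)
  · exact .inr (hG.path_concat hq hp h.symm
      (hG.mem_support_of_ne_mem_support_of_adj_of_isPath hp hq h hi))

theorem IsTree.exists_potential [AddCommMonoid α] (hG : G.IsTree) (f : V → V → α)
    (hf : ∀ i j, G.Adj i j → f i j + f j i = 0) :
    ∃ φ : V → α, ∀ i j, G.Adj i j → φ j = φ i + f i j := by
  obtain ⟨r⟩ := hG.connected.nonempty
  choose P hP using fun i => (hG.existsUnique_path r i).exists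
  refine ⟨fun i => (P i).sumAlong f, fun i j h => ?_⟩
  rcases hG.isAcyclic.concat_or_concat_of_adj (hP i) (hP j) h with hj | hi
  · dsimp only
    rw [hj, Walk.sumAlong_concat]
  · dsimp only
    rw [hi, Walk.sumAlong_concat, add_assoc, hf j i h.symm, add_zero]

theorem Preconnected.eq_of_mul_consistent [Mul α] (hG : G.Preconnected) {B C : V → V → α}
    (hB : ∀ i j k, B i k = B i j * B j k) (hC : ∀ i j k, C i k = C i j * C j k)
    (hdiag : ∀ i, B i i = C i i) (hadj : ∀ i j, G.Adj i j → B i j = C i j) : B = C := by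
  suffices ∀ {u v : V} (p : G.Walk u v), B u v = C u v from
    funext fun u => funext fun v => this (hG u v).some
  intro u v p
  induction p with
  | nil => exact hdiag _
  | @cons u x v h p ih => rw [hB u x v, hC u x v, hadj u x h, ih]

end SimpleGraph

theorem diag_eq_one_of_mul_consistent {V α : Type*} [MonoidWithZero α]
    [IsLeftCancelMulZero α] {B : V → V → α}
    (hB : ∀ i j k, B i k = B i j * B j k) {i : V} (hi : B i i ≠ 0) : B i i = 1 :=
  (mul_eq_left₀ hi).mp (hB i i i).symm

theorem tree_incomplete_pcm_unique_consistent_completion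
    (n : ℕ) (G : SimpleGraph (Fin n)) (hT : G.IsTree)
    (a : Fin n → Fin n → ℝ)
    (hpos : ∀ i j, G.Adj i j → 0 < a i j)
    (hrec : ∀ i j, G.Adj i j → a j i = 1 / a i j) :
    ∃! B : Matrix (Fin n) (Fin n) ℝ,
      (∀ i j, 0 < B i j) ∧ (∀ i j, B j i = 1 / B i j) ∧
      (∀ i j k, B i k = B i j * B j k) ∧
      (∀ i j, G.Adj i j → B i j = a i j) := by
  obtain ⟨φ, hφ⟩ := hT.exists_potential (fun i j => Real.log (a i j)) fun i j h => by
    rw [hrec i j h, one_div, Real.log_inv, add_neg_cancel]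
  set B : Matrix (Fin n) (Fin n) ℝ := fun i j => Real.exp (φ j - φ i)
  have hB : (∀ i j, 0 < B i j) ∧ (∀ i j, B j i = 1 / B i j) ∧
      (∀ i j k, B i k = B i j * B j k) ∧ (∀ i j, G.Adj i j → B i j = a i j) := by
    refine ⟨fun i j => Real.exp_pos _, fun i j => ?_, fun i j k => ?_, fun i j h => ?_⟩
    · rw [one_div, ← Real.exp_neg, neg_sub]
    · rw [← Real.exp_add, sub_add_sub_cancel']
    · show Real.exp (φ j - φ i) = a i j
      rw [hφ i j h, add_sub_cancel_left, Real.exp_log (hpos i j h)]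
  refine ⟨B, hB, fun C ⟨hCpos, _, hC, hCa⟩ => ?_⟩
  refine hT.connected.preconnected.eq_of_mul_consistent hC hB.2.2.1
    (fun i => ?_) fun i j h => by rw [hCa i j h, hB.2.2.2 i j h]
  rw [diag_eq_one_of_mul_consistent hC (hCpos i i).ne',
    diag_eq_one_of_mul_consistent hB.2.2.1 (hB.1 i i).ne']
end

section
/- If the representing graph G of an incomplete PCM is connected, then any two completions to consistent PCMs that extend the given entries coincide; more precisely, if the given entries admit a consistent completion, it is unique. -/
theorem connected_incomplete_pcm_completion_unique
    (n : ℕ) (G : SimpleGraph (Fin n)) (hG : G.Connected)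
    (a : Fin n → Fin n → ℝ)
    (hpos : ∀ i j, G.Adj i j → 0 < a i j)
    (hrec : ∀ i j, G.Adj i j → a j i = 1 / a i j)
    (B C : Matrix (Fin n) (Fin n) ℝ)
    (hBp : ∀ i j, 0 < B i j) (hBr : ∀ i j, B j i = 1 / B i j)
    (hBc : ∀ i j k, B i k = B i j * B j k)
    (hBe : ∀ i j, G.Adj i j → B i j = a i j)
    (hCp : ∀ i j, 0 < C i j) (hCr : ∀ i j, C j i = 1 / C i j)
    (hCc : ∀ i j k, C i k = C i j * C j k)
    (hCe : ∀ i j, G.Adj i j → C i j = a i j) :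
    B = C := by
  have hB1 : ∀ i, B i i = 1 := by
    intro i
    have h := hBc i i i
    have := (hBp i i).ne'
    nlinarith [hBp i i]
  have hC1 : ∀ i, C i i = 1 := by
    intro i
    have h := hCc i i i
    nlinarith [hCp i i]
  have key : ∀ i j : Fin n, ∀ _p : G.Walk i j, B i j = C i j := by
    intro i j p
    induction p with
    | nil => rw [hB1, hC1]
    | cons h q ih =>
      rename_i u v w
      rw [hBc u v w, hCc u v w, ih, hBe u v h, hCe u v h]
  funext i j
  exact key i j (hG i j).some
end

section
/- An incomplete PCM whose representing graph is connected admits a consistent completion if and only if for every cycle v_0, v_1, ..., v_k = v_0 in the graph, the product of the given entries a_{v_0 v_1} · a_{v_1 v_2} · ... · a_{v_{k-1} v_k} equals 1. -/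
open SimpleGraph

private def wprod {n : ℕ} {G : SimpleGraph (Fin n)} (a : Fin n → Fin n → ℝ)
    {u v : Fin n} (w : G.Walk u v) : ℝ :=
  (w.darts.map (fun d => a d.toProd.1 d.toProd.2)).prod

private lemma wprod_append {n : ℕ} {G : SimpleGraph (Fin n)} (a : Fin n → Fin n → ℝ)
    {u v x : Fin n} (p : G.Walk u v) (q : G.Walk v x) :
    wprod a (p.append q) = wprod a p * wprod a q := by
  simp [wprod, Walk.darts_append]

private lemma wprod_pos {n : ℕ} {G : SimpleGraph (Fin n)} {a : Fin n → Fin n → ℝ}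
    (hpos : ∀ i j, G.Adj i j → 0 < a i j)
    {u v : Fin n} (p : G.Walk u v) : 0 < wprod a p := by
  induction p with
  | nil => simp [wprod]
  | cons h p ih =>
    simp only [wprod, Walk.darts_cons, List.map_cons, List.prod_cons] at ih ⊢
    exact mul_pos (hpos _ _ h) ih

private lemma wprod_reverse {n : ℕ} {G : SimpleGraph (Fin n)} {a : Fin n → Fin n → ℝ}
    (hpos : ∀ i j, G.Adj i j → 0 < a i j)
    (hrec : ∀ i j, G.Adj i j → a j i = 1 / a i j)
    {u v : Fin n} (p : G.Walk u v) : wprod a p.reverse = 1 / wprod a p := by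
  induction p with
  | nil => simp [wprod]
  | cons h p ih =>
    have h1 : (Walk.cons h p).reverse = p.reverse.append (Walk.cons h.symm Walk.nil) := by
      simp [Walk.reverse_cons]
    rw [h1, wprod_append, ih]
    simp only [wprod, Walk.darts_cons, Walk.darts_nil, List.map_cons, List.map_nil,
      List.prod_cons, List.prod_nil, mul_one]
    rw [hrec _ _ h, div_mul_div_comm, one_mul, mul_comm]

theorem connected_incomplete_pcm_consistent_completion_iff_cycles
    (n : ℕ) (G : SimpleGraph (Fin n)) (hG : G.Connected)
    (a : Fin n → Fin n → ℝ)
    (hpos : ∀ i j, G.Adj i j → 0 < a i j)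
    (hrec : ∀ i j, G.Adj i j → a j i = 1 / a i j) :
    (∃ B : Matrix (Fin n) (Fin n) ℝ,
      (∀ i j, 0 < B i j) ∧ (∀ i j, B j i = 1 / B i j) ∧
      (∀ i j k, B i k = B i j * B j k) ∧
      (∀ i j, G.Adj i j → B i j = a i j)) ↔
    (∀ (v : Fin n) (w : G.Walk v v),
      (w.darts.map (fun d => a d.toProd.1 d.toProd.2)).prod = 1) := by
  classical
  constructor
  · rintro ⟨B, hBpos, hBrec, hBcons, hBa⟩ v w
    have hBvv : B v v = 1 := by
      have := hBcons v v v
      have h := hBpos v v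
      nlinarith
    have hB1 : ∀ u : Fin n, B u u = 1 := by
      intro u
      have := hBcons u u u
      have h := hBpos u u
      nlinarith
    have key : ∀ {u x : Fin n} (p : G.Walk u x), wprod a p = B u x := by
      intro u x p
      induction p with
      | nil => simpa [wprod] using (hB1 _).symm
      | cons h p ih =>
        simp only [wprod, Walk.darts_cons, List.map_cons, List.prod_cons] at ih ⊢
        rw [ih, ← hBa _ _ h]
        exact (hBcons _ _ _).symm
    have := key w
    rw [wprod] at this
    rw [this, hBvv]
  · intro hcyc
    -- B i j := product along some walk from i to j
    have hreach : ∀ i j : Fin n, G.Reachable i j := hG.preconnected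
    let W : ∀ i j : Fin n, G.Walk i j := fun i j => (hreach i j).some
    have indep : ∀ {i j : Fin n} (p : G.Walk i j), wprod a p = wprod a (W i j) := by
      intro i j p
      have hc := hcyc i (p.append (W i j).reverse)
      have : wprod a (p.append (W i j).reverse) = 1 := hc
      rw [wprod_append, wprod_reverse hpos hrec] at this
      have hq := wprod_pos hpos (W i j)
      have hp := wprod_pos hpos p
      field_simp at this
      linarith
    refine ⟨fun i j => wprod a (W i j), fun i j => wprod_pos hpos (W i j), ?_, ?_, ?_⟩
    · intro i j
      show wprod a (W j i) = 1 / wprod a (W i j)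
      rw [← indep (W i j).reverse, wprod_reverse hpos hrec]
    · intro i j k
      show wprod a (W i k) = wprod a (W i j) * wprod a (W j k)
      rw [← indep ((W i j).append (W j k)), wprod_append]
    · intro i j hadj
      show wprod a (W i j) = a i j
      rw [← indep (Walk.cons hadj Walk.nil)]
      simp [wprod]
end
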